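/- Let E be a finite group with E' ⊆ Z(E), let φ be a faithful irreducible character of E with φ(1) = |E : Z(E)|^{1/2}, and let T be a subgroup with Z(E) ≤ T. If ϑ is an irreducible character of T with ⟨φ|_T, ϑ⟩_T > 0, then supp(ϑ) = Z(T). -/

import Mathlib

/-!
By Schur's lemma central elements act by scalars on the simple modules `V` and `W`, and since
`⟨φ|_T, ϑ⟩ ≠ 0`, an element of `T` acting by scalars on both acts by the same scalar on both
(translating the inner product by it multiplies it by the ratio of the two scalars).
If `ϑ(t) ≠ 0` and `s ∈ T`, the commutator `z = [t⁻¹, s]` lies in `E' ⊆ Z(E)` and `t z` is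
conjugate to `t`, so `z` acts trivially on `W`, hence on `V`, hence `z = 1` by faithfulness.
Conversely a central `t ∈ T` acts on `W` by a nonzero scalar `c`, so `ϑ(t) = c ϑ(1) ≠ 0`.
-/

open CategoryTheory
open scoped commutatorElement

universe u v

namespace FDRep

variable {k : Type u} {G : Type v} [Field k]

section Monoid

variable [Monoid G]

lemma exists_ρ_eq_smul_one_of_mem_center [IsAlgClosed k] (V : FDRep k G) [Simple V] {z : G}
    (hz : z ∈ Submonoid.center G) : ∃ c : k, V.ρ z = c • 1 := by
  let f : V ⟶ V := ⟨FGModuleCat.ofHom (V.ρ z), fun g => by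
    ext v
    change V.ρ z (V.ρ g v) = V.ρ g (V.ρ z v)
    rw [← Module.End.mul_apply, ← Module.End.mul_apply, ← map_mul, ← map_mul,
      Submonoid.mem_center_iff.1 hz]⟩
  obtain ⟨c, hc⟩ := endomorphism_simple_eq_smul_id k f
  refine ⟨c, LinearMap.ext fun v => ?_⟩
  exact (congrArg (fun g : V ⟶ V => g.hom v) hc).symm

lemma character_mul_of_ρ_eq_smul_one (V : FDRep k G) {z : G} {c : k} (hz : V.ρ z = c • 1)
    (g : G) : V.character (z * g) = c * V.character g := by
  rw [character, map_mul, hz, smul_mul_assoc, one_mul, map_smul, smul_eq_mul, character]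

lemma nontrivial_of_simple (V : FDRep k G) [Simple V] : Nontrivial V := by
  by_contra h
  rw [not_nontrivial_iff_subsingleton] at h
  exact id_nonzero V (by ext v; exact Subsingleton.elim _ _)

end Monoid

section Group

variable [Group G]

lemma ρ_inv_eq_inv_smul_one (V : FDRep k G) [Nontrivial V] {z : G} {c : k}
    (hz : V.ρ z = c • 1) : c ≠ 0 ∧ V.ρ z⁻¹ = c⁻¹ • 1 := by
  have hmul : c • V.ρ z⁻¹ = 1 := by rw [← smul_one_mul, ← hz, ← map_mul, mul_inv_cancel, map_one]
  have hc : c ≠ 0 := by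
    rintro rfl
    exact zero_ne_one (α := Module.End k V) (by rwa [zero_smul] at hmul)
  refine ⟨hc, ?_⟩
  rw [← hmul, smul_smul, inv_mul_cancel₀ hc, one_smul]

lemma character_ne_zero_of_mem_center [IsAlgClosed k] [CharZero k] (V : FDRep k G) [Simple V]
    {z : G} (hz : z ∈ Subgroup.center G) : V.character z ≠ 0 := by
  have := nontrivial_of_simple V
  obtain ⟨c, hc⟩ := exists_ρ_eq_smul_one_of_mem_center V hz
  have hchar := character_mul_of_ρ_eq_smul_one V hc 1
  rw [mul_one, char_one] at hchar
  rw [hchar]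
  exact mul_ne_zero (ρ_inv_eq_inv_smul_one V hc).1 (Nat.cast_ne_zero.2 Module.finrank_pos.ne')

variable {E : Type v} [Group E] {T : Subgroup E}

lemma smul_eq_of_finsum_character_ne_zero (V : FDRep k E) (W : FDRep k T) [Nontrivial W]
    {z : T} {a b : k} (hV : V.ρ z = a • 1) (hW : W.ρ z = b • 1)
    (h : ∑ᶠ t : T, V.character t * W.character t⁻¹ ≠ 0) : a = b := by
  set S := ∑ᶠ t : T, V.character t * W.character t⁻¹
  obtain ⟨hb, hW'⟩ := ρ_inv_eq_inv_smul_one W hW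
  have hterm : ∀ t : T, V.character ↑(z * t) * W.character (z * t)⁻¹
      = a * b⁻¹ * (V.character t * W.character t⁻¹) := fun t => by
    rw [Subgroup.coe_mul, mul_inv_rev, char_mul_comm W, character_mul_of_ρ_eq_smul_one V hV,
      character_mul_of_ρ_eq_smul_one W hW']
    ring
  have hS : S = a * b⁻¹ * S := by
    calc S = ∑ᶠ t : T, V.character ↑(z * t) * W.character (z * t)⁻¹ :=
          (finsum_comp_equiv (Equiv.mulLeft z)).symm
      _ = a * b⁻¹ * S := by rw [finsum_congr hterm, mul_finsum]
  have hab : a * b⁻¹ = 1 := by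
    have h0 : (a * b⁻¹ - 1) * S = 0 := by linear_combination -hS
    exact sub_eq_zero.1 ((mul_eq_zero.1 h0).resolve_right h)
  rwa [mul_inv_eq_one₀ hb] at hab

lemma mem_center_of_character_ne_zero [IsAlgClosed k] (hE : commutator E ≤ Subgroup.center E)
    (V : FDRep k E) [Simple V] (hfaith : ∀ g : E, V.character g = V.character 1 → g = 1)
    (W : FDRep k T) [Simple W]
    (h : ∑ᶠ t : T, V.character t * W.character t⁻¹ ≠ 0) {t : T} (ht : W.character t ≠ 0) :
    t ∈ Subgroup.center T := by
  have := nontrivial_of_simple W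
  refine Subgroup.mem_center_iff.2 fun s => ?_
  set z : T := t⁻¹ * s * t * s⁻¹ with hz
  have hzE : (z : E) ∈ Subgroup.center E := hE <| by
    rw [show (z : E) = ⁅(t : E)⁻¹, (s : E)⁆ by simp [z, commutatorElement_def]]
    exact Subgroup.commutator_mem_commutator (Subgroup.mem_top _) (Subgroup.mem_top _)
  have hzT : z ∈ Subgroup.center T :=
    Subgroup.mem_center_iff.2 fun u => Subtype.ext (Subgroup.mem_center_iff.1 hzE u)
  obtain ⟨a, ha⟩ := exists_ρ_eq_smul_one_of_mem_center V hzE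
  obtain ⟨b, hb⟩ := exists_ρ_eq_smul_one_of_mem_center W hzT
  have hb1 : b = 1 := by
    have hconj : W.character (z * t) = W.character t := by
      rw [char_mul_comm, show t * z = s * t * s⁻¹ by rw [hz]; group, char_conj]
    rw [character_mul_of_ρ_eq_smul_one W hb] at hconj
    exact (mul_eq_right₀ ht).1 hconj
  have ha1 : a = 1 := (smul_eq_of_finsum_character_ne_zero V W ha hb h).trans hb1
  have hz1 : z = 1 := Subtype.ext <| hfaith _ <| by
    simpa [ha1] using character_mul_of_ρ_eq_smul_one V ha 1
  calc s * t = t * z * s := by rw [hz]; group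
    _ = t * s := by rw [hz1, mul_one]

end Group

end FDRep

theorem stmt3_general {E : Type} [Group E]
    (hE : commutator E ≤ Subgroup.center E)
    (V : FDRep ℂ E) (hV : CategoryTheory.Simple V)
    (hfaith : ∀ g : E, V.character g = V.character 1 → g = 1)
    (T : Subgroup E)
    (W : FDRep ℂ ↥T) (hW : CategoryTheory.Simple W)
    (hpos : 0 < ((1 / (Nat.card T : ℂ)) *
      ∑ᶠ t : T, V.character (t : E) * W.character t⁻¹).re) :
    {t : T | W.character t ≠ 0} = (Subgroup.center ↥T : Set ↥T) := by
  have hinner : ∑ᶠ t : T, V.character (t : E) * W.character t⁻¹ ≠ 0 := fun h => by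
    simp [h] at hpos
  ext t
  exact ⟨FDRep.mem_center_of_character_ne_zero hE V hfaith W hinner,
    FDRep.character_ne_zero_of_mem_center W⟩

/-- If `E' ⊆ Z(E)`, `φ` is a faithful irreducible character of `E` with
`φ(1) = |E : Z(E)|^{1/2}`, `Z(E) ≤ T ≤ E`, and `ϑ ∈ Irr(T)` with `⟨φ|_T, ϑ⟩_T > 0`,
then `supp ϑ = Z(T)`. -/
theorem stmt3 {E : Type} [Group E] [Fintype E]
    (hE : commutator E ≤ Subgroup.center E)
    (V : FDRep ℂ E) (hV : CategoryTheory.Simple V)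
    (hfaith : ∀ g : E, V.character g = V.character 1 → g = 1)
    (hdeg : V.character 1 ^ 2 = ((Subgroup.center E).index : ℂ))
    (T : Subgroup E) (hT : Subgroup.center E ≤ T)
    (W : FDRep ℂ ↥T) (hW : CategoryTheory.Simple W)
    (hpos : 0 < ((1 / (Nat.card T : ℂ)) *
      ∑ᶠ t : T, V.character (t : E) * W.character t⁻¹).re) :
    {t : T | W.character t ≠ 0} = (Subgroup.center ↥T : Set ↥T) :=
  stmt3_general hE V hV hfaith T W hW hpos
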